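/- Let g be a carcass map whose complete pre-image of 0 is dense in [0,1]. Then there exists exactly one homeomorphism h : [0,1] → [0,1] with h(0) = 0 satisfying h ∘ f = g ∘ h, where f is the tent map. -/

import Mathlib

open Set

/-- The tent map: `f(x) = 2x` for `x ≤ 1/2` and `f(x) = 2 - 2x` for `x ≥ 1/2`. -/
noncomputable def tent (x : ℝ) : ℝ := min (2 * x) (2 - 2 * x)

/-- A unimodal map of `[0,1]`. -/
def IsUnimodal (g : ℝ → ℝ) : Prop :=
  ContinuousOn g (Icc 0 1) ∧ MapsTo g (Icc 0 1) (Icc 0 1) ∧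
  ∃ v ∈ Ioo (0:ℝ) 1, StrictMonoOn g (Icc 0 v) ∧ StrictAntiOn g (Icc v 1) ∧
    g 0 = 0 ∧ g 1 = 0 ∧ g v = 1

/-- `g` is piecewise linear (affine) on `[a,b]`. -/
def IsPLOn (g : ℝ → ℝ) (a b : ℝ) : Prop :=
  ∃ (n : ℕ) (p : ℕ → ℝ), 0 < n ∧ p 0 = a ∧ p n = b ∧
    (∀ i < n, p i < p (i + 1)) ∧
    ∀ i < n, ∃ c d : ℝ, ∀ x ∈ Icc (p i) (p (i + 1)), g x = c * x + d

/-- A carcass map: a piecewise linear unimodal map. -/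
def IsCarcass (g : ℝ → ℝ) : Prop := IsUnimodal g ∧ IsPLOn g 0 1

/-- `g^{-n}(0)`, the set of points of `[0,1]` mapped to `0` by the `n`-th iterate. -/
def preimZero (g : ℝ → ℝ) (n : ℕ) : Set ℝ := {x ∈ Icc (0:ℝ) 1 | g^[n] x = 0}

/-- The complete pre-image of `0` under `g`. -/
def completePreimZero (g : ℝ → ℝ) : Set ℝ := ⋃ n ∈ {n : ℕ | 1 ≤ n}, preimZero g n

/-- A homeomorphism of `[0,1]` onto itself (a continuous bijection of the compact
interval `[0,1]`, whose inverse is then automatically continuous). -/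
def IsHomeoI (h : ℝ → ℝ) : Prop :=
  ContinuousOn h (Icc 0 1) ∧ BijOn h (Icc 0 1) (Icc 0 1)

/-- `h` is a topological conjugacy from the tent map to `g`, i.e. a homeomorphism of
`[0,1]` with `h 0 = 0` and `h ∘ f = g ∘ h`. -/
def ConjTent (g h : ℝ → ℝ) : Prop :=
  IsHomeoI h ∧ h 0 = 0 ∧ ∀ x ∈ Icc (0:ℝ) 1, h (tent x) = g (h x)

/-- A kink of a (piecewise linear) map: an interior point where it is not differentiable. -/
def IsKink (g : ℝ → ℝ) (x : ℝ) : Prop := x ∈ Ioo (0:ℝ) 1 ∧ ¬ DifferentiableAt ℝ g x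

/-- A firm carcass map: a carcass map all of whose kinks are in the complete
pre-image of `0`. -/
def IsFirm (g : ℝ → ℝ) : Prop := IsCarcass g ∧ ∀ x, IsKink g x → x ∈ completePreimZero g

/-- A self-semiconjugation of `g`: a continuous surjective map `ψ : [0,1] → [0,1]`
with `ψ ∘ g = g ∘ ψ`. -/
def IsSelfSemiconj (g ψ : ℝ → ℝ) : Prop :=
  ContinuousOn ψ (Icc 0 1) ∧ MapsTo ψ (Icc 0 1) (Icc 0 1) ∧ SurjOn ψ (Icc 0 1) (Icc 0 1) ∧
  ∀ x ∈ Icc (0:ℝ) 1, ψ (g x) = g (ψ x)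

/-- The map `ξ_t(x) = (1 - (-1)^⌊tx⌋)/2 + (-1)^⌊tx⌋ · {tx}`. -/
noncomputable def xi (t : ℕ) (x : ℝ) : ℝ :=
  (1 - (-1 : ℝ) ^ ⌊(t : ℝ) * x⌋) / 2 + (-1 : ℝ) ^ ⌊(t : ℝ) * x⌋ * Int.fract ((t : ℝ) * x)

/-- `μ` enumerates, for each `n ≥ 1`, the set `g^{-n}(0)` in increasing order as
`μ n 0 < μ n 1 < … < μ n 2^{n-1}`. -/
def IsMuSeq (g : ℝ → ℝ) (μ : ℕ → ℕ → ℝ) : Prop :=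
  ∀ n, 1 ≤ n →
    (∀ k < 2 ^ (n - 1), μ n k < μ n (k + 1)) ∧
    ∀ x, x ∈ preimZero g n ↔ ∃ k ≤ 2 ^ (n - 1), μ n k = x

/-!
If `h` conjugates the tent map to `g`, then `h (x / 2) = L (h x)` and `h (1 - x / 2) = R (h x)`,
where `L` and `R` are the inverse branches of `g`. Starting from `h 0 = 0` and `h 1 = 1`, these
relations determine `h` on every dyadic point, and the dyadic points of level `n` are sent,
increasingly, onto `g^{-n}(0)`. As the dyadic points are dense, there is at most one conjugacy.
Conversely, the increasing map from the dyadic points onto the complete pre-image of `0` extends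
by suprema to a strictly increasing map of `[0,1]`; its image contains a dense set, so it is
continuous, hence a homeomorphism, and the conjugacy equation extends from the dyadic points by
continuity.
-/

open Filter Function Topology

lemma continuousOn_Icc_of_monotoneOn_of_subset_closure_image {α β : Type*}
    [LinearOrder α] [TopologicalSpace α] [OrderTopology α]
    [LinearOrder β] [TopologicalSpace β] [OrderTopology β] [DenselyOrdered β]
    {f : α → β} {a b : α} {c d : β}
    (hmono : MonotoneOn f (Icc a b)) (hmaps : MapsTo f (Icc a b) (Icc c d))
    (hdense : Icc c d ⊆ closure (f '' Icc a b)) : ContinuousOn f (Icc a b) := by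
  rw [continuousOn_iff_continuous_domRestrict, ← hmaps.coe_restrict]
  have hE : Monotone hmaps.restrict := fun x y hxy => hmono x.2 y.2 hxy
  have hdenseE : DenseRange hmaps.restrict := by
    rwa [DenseRange, hmaps.range_restrict, Subtype.dense_iff, Subtype.image_preimage_coe,
      inter_eq_right.2 hmaps.image_subset]
  exact continuous_subtype_val.comp (hE.continuous_of_denseRange hdenseE)

lemma tent_of_le_half {x : ℝ} (hx : x ≤ 1 / 2) : tent x = 2 * x := min_eq_left (by linarith)

lemma tent_of_half_le {x : ℝ} (hx : 1 / 2 ≤ x) : tent x = 2 - 2 * x := min_eq_right (by linarith)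

lemma tent_zero : tent 0 = 0 := by norm_num [tent]

lemma tent_one : tent 1 = 0 := by norm_num [tent]

lemma tent_half : tent (1 / 2) = 1 := by norm_num [tent]

lemma continuous_tent : Continuous tent := by unfold tent; fun_prop

lemma tent_mapsTo : MapsTo tent (Icc 0 1) (Icc 0 1) := by
  intro x ⟨hx₀, hx₁⟩
  rcases le_total x (1 / 2) with h | h
  · rw [tent_of_le_half h]; constructor <;> linarith
  · rw [tent_of_half_le h]; constructor <;> linarith

lemma strictMonoOn_tent : StrictMonoOn tent (Icc 0 (1 / 2)) := by
  intro x hx y hy hxy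
  rw [tent_of_le_half hx.2, tent_of_le_half hy.2]; linarith

lemma strictAntiOn_tent : StrictAntiOn tent (Icc (1 / 2) 1) := by
  intro x hx y hy hxy
  rw [tent_of_half_le hx.1, tent_of_half_le hy.1]; linarith

def dyadicPoints (n : ℕ) : Set ℝ := {x ∈ Icc 0 1 | ∃ k : ℤ, 2 ^ n * x = k}

lemma zero_mem_dyadicPoints (n : ℕ) : (0 : ℝ) ∈ dyadicPoints n :=
  ⟨left_mem_Icc.2 zero_le_one, 0, by simp⟩

lemma one_mem_dyadicPoints (n : ℕ) : (1 : ℝ) ∈ dyadicPoints n :=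
  ⟨right_mem_Icc.2 zero_le_one, 2 ^ n, by simp⟩

lemma iUnion_dyadicPoints_subset : ⋃ n, dyadicPoints n ⊆ Icc 0 1 :=
  iUnion_subset fun _ _ hx => hx.1

lemma eq_zero_or_eq_one_of_mem_dyadicPoints_zero {x : ℝ} (hx : x ∈ dyadicPoints 0) :
    x = 0 ∨ x = 1 := by
  obtain ⟨⟨hx₀, hx₁⟩, k, hk⟩ := hx
  rw [pow_zero, one_mul] at hk
  subst hk
  have hk₀ : (0 : ℤ) ≤ k := by exact_mod_cast hx₀
  have hk₁ : k ≤ 1 := by exact_mod_cast hx₁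
  rcases (by omega : k = 0 ∨ k = 1) with rfl | rfl <;> simp

lemma dyadicPoints_mono : Monotone dyadicPoints := by
  refine monotone_nat_of_le_succ fun n x ⟨hx, k, hk⟩ => ⟨hx, 2 * k, ?_⟩
  rw [pow_succ, mul_comm _ (2 : ℝ), mul_assoc, hk]; push_cast; ring

lemma tent_mem_dyadicPoints {n : ℕ} {x : ℝ} (hx : x ∈ dyadicPoints (n + 1)) :
    tent x ∈ dyadicPoints n := by
  obtain ⟨hxI, k, hk⟩ := hx
  refine ⟨tent_mapsTo hxI, ?_⟩
  rw [pow_succ] at hk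
  rcases le_total x (1 / 2) with h | h
  · exact ⟨k, by rw [tent_of_le_half h, ← hk]; ring⟩
  · exact ⟨2 ^ (n + 1) - k, by rw [tent_of_half_le h]; push_cast; rw [← hk]; ring⟩

lemma half_mem_dyadicPoints {n : ℕ} {y : ℝ} (hy : y ∈ dyadicPoints n) :
    y / 2 ∈ dyadicPoints (n + 1) := by
  obtain ⟨⟨hy₀, hy₁⟩, k, hk⟩ := hy
  exact ⟨⟨by linarith, by linarith⟩, k, by rw [pow_succ, ← hk]; ring⟩

lemma one_sub_half_mem_dyadicPoints {n : ℕ} {y : ℝ} (hy : y ∈ dyadicPoints n) :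
    1 - y / 2 ∈ dyadicPoints (n + 1) := by
  obtain ⟨⟨hy₀, hy₁⟩, k, hk⟩ := hy
  exact ⟨⟨by linarith, by linarith⟩, 2 ^ (n + 1) - k, by push_cast; rw [pow_succ, ← hk]; ring⟩

lemma Icc_subset_closure_iUnion_dyadicPoints : Icc 0 1 ⊆ closure (⋃ n, dyadicPoints n) := by
  intro x ⟨hx₀, hx₁⟩
  set d : ℕ → ℝ := fun n => ⌊2 ^ n * x⌋ / 2 ^ n
  have hd_le (n : ℕ) : d n ≤ x := by
    rw [div_le_iff₀ (by positivity), mul_comm]; exact Int.floor_le _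
  have hd_ge (n : ℕ) : x - (1 / 2) ^ n ≤ d n := by
    rw [le_div_iff₀ (by positivity), sub_mul, div_pow, one_pow, div_mul_cancel₀ _ (by positivity),
      mul_comm]
    linarith [Int.lt_floor_add_one (2 ^ n * x)]
  have hd_mem (n : ℕ) : d n ∈ ⋃ n, dyadicPoints n := by
    refine mem_iUnion.2 ⟨n, ⟨⟨?_, (hd_le n).trans hx₁⟩, ⌊2 ^ n * x⌋, ?_⟩⟩
    · positivity
    · exact mul_div_cancel₀ _ (by positivity)
  have hlim : Tendsto d atTop (𝓝 x) := by
    refine tendsto_of_tendsto_of_tendsto_of_le_of_le ?_ tendsto_const_nhds hd_ge hd_le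
    simpa using tendsto_const_nhds.sub
      (tendsto_pow_atTop_nhds_zero_of_lt_one (by norm_num : (0 : ℝ) ≤ 1 / 2) (by norm_num))
  exact mem_closure_of_tendsto hlim (Eventually.of_forall hd_mem)

lemma exists_dyadicPoints_mem_Ioo {x y : ℝ} (hx : 0 ≤ x) (hxy : x < y) (hy : y ≤ 1) :
    ∃ n, ∃ a ∈ dyadicPoints n, a ∈ Ioo x y := by
  have hmid := Icc_subset_closure_iUnion_dyadicPoints
    (⟨by linarith, by linarith⟩ : (x + y) / 2 ∈ Icc (0 : ℝ) 1)
  obtain ⟨a, ha, haD⟩ := mem_closure_iff.1 hmid (Ioo x y) isOpen_Ioo ⟨by linarith, by linarith⟩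
  obtain ⟨n, hn⟩ := mem_iUnion.1 haD
  exact ⟨n, a, hn, ha⟩

lemma exists_dyadicPoints_between {x y : ℝ} (hx : 0 ≤ x) (hxy : x < y) (hy : y ≤ 1) :
    ∃ n, ∃ a ∈ dyadicPoints n, ∃ b ∈ dyadicPoints n, x < a ∧ a < b ∧ b < y := by
  obtain ⟨m, a, ha, hxa, hay⟩ := exists_dyadicPoints_mem_Ioo hx hxy hy
  obtain ⟨n, b, hb, hab, hby⟩ := exists_dyadicPoints_mem_Ioo (hx.trans hxa.le) hay hy
  exact ⟨max m n, a, dyadicPoints_mono (le_max_left m n) ha,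
    b, dyadicPoints_mono (le_max_right m n) hb, hxa, hab, hby⟩

structure UnimodalWithPeak (g : ℝ → ℝ) (v : ℝ) : Prop where
  continuousOn : ContinuousOn g (Icc 0 1)
  peak_mem : v ∈ Ioo 0 1
  strictMonoOn : StrictMonoOn g (Icc 0 v)
  strictAntiOn : StrictAntiOn g (Icc v 1)
  map_zero : g 0 = 0
  map_one : g 1 = 0
  map_peak : g v = 1

lemma IsUnimodal.exists_unimodalWithPeak {g : ℝ → ℝ} (hg : IsUnimodal g) :
    ∃ v, UnimodalWithPeak g v :=
  let ⟨hc, _, v, hv, hmono, hanti, h0, h1, hv1⟩ := hg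
  ⟨v, hc, hv, hmono, hanti, h0, h1, hv1⟩

noncomputable def leftBranch (g : ℝ → ℝ) (v : ℝ) : ℝ → ℝ := invFunOn g (Icc 0 v)

noncomputable def rightBranch (g : ℝ → ℝ) (v : ℝ) : ℝ → ℝ := invFunOn g (Icc v 1)

namespace UnimodalWithPeak

variable {g : ℝ → ℝ} {v : ℝ} (hg : UnimodalWithPeak g v)
include hg

lemma surjOn_left : SurjOn g (Icc 0 v) (Icc 0 1) := by
  have := intermediate_value_Icc hg.peak_mem.1.le
    (hg.continuousOn.mono (Icc_subset_Icc_right hg.peak_mem.2.le))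
  rwa [hg.map_zero, hg.map_peak] at this

lemma surjOn_right : SurjOn g (Icc v 1) (Icc 0 1) := by
  have := intermediate_value_Icc' hg.peak_mem.2.le
    (hg.continuousOn.mono (Icc_subset_Icc_left hg.peak_mem.1.le))
  rwa [hg.map_one, hg.map_peak] at this

lemma mapsTo : MapsTo g (Icc 0 1) (Icc 0 1) := by
  intro x ⟨hx₀, hx₁⟩
  have hv := hg.peak_mem
  rcases le_total x v with h | h
  · have hx : x ∈ Icc 0 v := ⟨hx₀, h⟩
    refine ⟨?_, ?_⟩
    · rw [← hg.map_zero]; exact hg.strictMonoOn.monotoneOn ⟨le_rfl, hv.1.le⟩ hx hx₀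
    · rw [← hg.map_peak]; exact hg.strictMonoOn.monotoneOn hx ⟨hv.1.le, le_rfl⟩ h
  · have hx : x ∈ Icc v 1 := ⟨h, hx₁⟩
    refine ⟨?_, ?_⟩
    · rw [← hg.map_one]; exact hg.strictAntiOn.antitoneOn hx ⟨hv.2.le, le_rfl⟩ hx₁
    · rw [← hg.map_peak]; exact hg.strictAntiOn.antitoneOn ⟨le_rfl, hv.2.le⟩ hx h

lemma leftBranch_mem {y : ℝ} (hy : y ∈ Icc 0 1) : leftBranch g v y ∈ Icc 0 v :=
  invFunOn_mem (hg.surjOn_left hy)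

lemma rightBranch_mem {y : ℝ} (hy : y ∈ Icc 0 1) : rightBranch g v y ∈ Icc v 1 :=
  invFunOn_mem (hg.surjOn_right hy)

lemma map_leftBranch {y : ℝ} (hy : y ∈ Icc 0 1) : g (leftBranch g v y) = y :=
  invFunOn_eq (hg.surjOn_left hy)

lemma map_rightBranch {y : ℝ} (hy : y ∈ Icc 0 1) : g (rightBranch g v y) = y :=
  invFunOn_eq (hg.surjOn_right hy)

lemma leftBranch_map {x : ℝ} (hx : x ∈ Icc 0 v) : leftBranch g v (g x) = x :=
  hg.strictMonoOn.injOn.leftInvOn_invFunOn hx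

lemma rightBranch_map {x : ℝ} (hx : x ∈ Icc v 1) : rightBranch g v (g x) = x :=
  hg.strictAntiOn.injOn.leftInvOn_invFunOn hx

lemma leftBranch_zero : leftBranch g v 0 = 0 := by
  simpa [hg.map_zero] using hg.leftBranch_map ⟨le_rfl, hg.peak_mem.1.le⟩

lemma leftBranch_one : leftBranch g v 1 = v := by
  simpa [hg.map_peak] using hg.leftBranch_map ⟨hg.peak_mem.1.le, le_rfl⟩

lemma rightBranch_zero : rightBranch g v 0 = 1 := by
  simpa [hg.map_one] using hg.rightBranch_map ⟨hg.peak_mem.2.le, le_rfl⟩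

lemma rightBranch_one : rightBranch g v 1 = v := by
  simpa [hg.map_peak] using hg.rightBranch_map ⟨le_rfl, hg.peak_mem.2.le⟩

lemma strictMonoOn_leftBranch : StrictMonoOn (leftBranch g v) (Icc 0 1) := by
  intro a ha b hb hab
  by_contra! h
  have := hg.strictMonoOn.monotoneOn (hg.leftBranch_mem hb) (hg.leftBranch_mem ha) h
  rw [hg.map_leftBranch ha, hg.map_leftBranch hb] at this
  exact this.not_gt hab

lemma strictAntiOn_rightBranch : StrictAntiOn (rightBranch g v) (Icc 0 1) := by
  intro a ha b hb hab
  by_contra! h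
  have := hg.strictAntiOn.antitoneOn (hg.rightBranch_mem ha) (hg.rightBranch_mem hb) h
  rw [hg.map_rightBranch ha, hg.map_rightBranch hb] at this
  exact this.not_gt hab

lemma eq_zero_or_eq_one_of_map_eq_zero {x : ℝ} (hx : x ∈ Icc 0 1) (h : g x = 0) :
    x = 0 ∨ x = 1 := by
  rcases le_total x v with hxv | hxv
  · left
    simpa [h, hg.leftBranch_zero] using (hg.leftBranch_map ⟨hx.1, hxv⟩).symm
  · right
    simpa [h, hg.rightBranch_zero] using (hg.rightBranch_map ⟨hxv, hx.2⟩).symm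

lemma eq_peak_of_map_eq_one {x : ℝ} (hx : x ∈ Icc 0 1) (h : g x = 1) : x = v := by
  rcases le_total x v with hxv | hxv
  · simpa [h, hg.leftBranch_one] using (hg.leftBranch_map ⟨hx.1, hxv⟩).symm
  · simpa [h, hg.rightBranch_one] using (hg.rightBranch_map ⟨hxv, hx.2⟩).symm

end UnimodalWithPeak

noncomputable def approxConj (g : ℝ → ℝ) (v : ℝ) : ℕ → ℝ → ℝ
  | 0 => id
  | n + 1 => fun x =>
    if x ≤ 1 / 2 then leftBranch g v (approxConj g v n (tent x))
    else rightBranch g v (approxConj g v n (tent x))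

lemma approxConj_succ_of_le_half {g : ℝ → ℝ} {v x : ℝ} (n : ℕ) (hx : x ≤ 1 / 2) :
    approxConj g v (n + 1) x = leftBranch g v (approxConj g v n (tent x)) :=
  if_pos hx

lemma approxConj_succ_of_half_lt {g : ℝ → ℝ} {v x : ℝ} (n : ℕ) (hx : 1 / 2 < x) :
    approxConj g v (n + 1) x = rightBranch g v (approxConj g v n (tent x)) :=
  if_neg hx.not_ge

namespace UnimodalWithPeak

variable {g : ℝ → ℝ} {v : ℝ} (hg : UnimodalWithPeak g v)
include hg

lemma approxConj_mapsTo (n : ℕ) : MapsTo (approxConj g v n) (Icc 0 1) (Icc 0 1) := by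
  induction n with
  | zero => exact mapsTo_id _
  | succ n ih =>
    intro x hx
    have hy := ih (tent_mapsTo hx)
    rcases le_or_gt x (1 / 2) with h | h
    · rw [approxConj_succ_of_le_half n h]
      exact Icc_subset_Icc_right hg.peak_mem.2.le (hg.leftBranch_mem hy)
    · rw [approxConj_succ_of_half_lt n h]
      exact Icc_subset_Icc_left hg.peak_mem.1.le (hg.rightBranch_mem hy)

lemma approxConj_zero (n : ℕ) : approxConj g v n 0 = 0 := by
  induction n with
  | zero => rfl
  | succ n ih =>
    rw [approxConj_succ_of_le_half n (by norm_num), tent_zero, ih, hg.leftBranch_zero]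

lemma approxConj_one (n : ℕ) : approxConj g v n 1 = 1 := by
  cases n with
  | zero => rfl
  | succ n =>
    rw [approxConj_succ_of_half_lt n (by norm_num), tent_one, hg.approxConj_zero,
      hg.rightBranch_zero]

/-- At `x = 1/2` both branches give the peak `v`. -/
lemma approxConj_succ_of_half_le {x : ℝ} (n : ℕ) (hx : 1 / 2 ≤ x) :
    approxConj g v (n + 1) x = rightBranch g v (approxConj g v n (tent x)) := by
  rcases hx.lt_or_eq with h | rfl
  · exact approxConj_succ_of_half_lt n h
  · rw [approxConj_succ_of_le_half n le_rfl, tent_half,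
      hg.approxConj_one, hg.leftBranch_one, hg.rightBranch_one]

lemma map_approxConj_succ {x : ℝ} (n : ℕ) (hx : x ∈ Icc 0 1) :
    g (approxConj g v (n + 1) x) = approxConj g v n (tent x) := by
  have hy := hg.approxConj_mapsTo n (tent_mapsTo hx)
  rcases le_total x (1 / 2) with h | h
  · rw [approxConj_succ_of_le_half n h, hg.map_leftBranch hy]
  · rw [hg.approxConj_succ_of_half_le n h, hg.map_rightBranch hy]

lemma strictMonoOn_approxConj (n : ℕ) : StrictMonoOn (approxConj g v n) (Icc 0 1) := by
  have hI₁ : MapsTo tent (Icc 0 (1 / 2)) (Icc 0 1) :=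
    tent_mapsTo.mono_left (Icc_subset_Icc_right (by norm_num))
  have hI₂ : MapsTo tent (Icc (1 / 2) 1) (Icc 0 1) :=
    tent_mapsTo.mono_left (Icc_subset_Icc_left (by norm_num))
  induction n with
  | zero => exact strictMono_id.strictMonoOn _
  | succ n ih =>
    have hleft : StrictMonoOn (approxConj g v (n + 1)) (Icc 0 (1 / 2)) :=
      (hg.strictMonoOn_leftBranch.comp (ih.comp strictMonoOn_tent hI₁)
        ((hg.approxConj_mapsTo n).comp hI₁)).congr fun x hx =>
        (approxConj_succ_of_le_half n hx.2).symm
    have hright : StrictMonoOn (approxConj g v (n + 1)) (Icc (1 / 2) 1) :=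
      (hg.strictAntiOn_rightBranch.comp (ih.comp_strictAntiOn strictAntiOn_tent hI₂)
        ((hg.approxConj_mapsTo n).comp hI₂)).congr fun x hx =>
        (hg.approxConj_succ_of_half_le n hx.1).symm
    rw [← Icc_union_Icc_eq_Icc (by norm_num : (0 : ℝ) ≤ 1 / 2) (by norm_num : (1 / 2 : ℝ) ≤ 1)]
    exact hleft.union hright (isGreatest_Icc (by norm_num)) (isLeast_Icc (by norm_num))

lemma approxConj_succ_of_mem_dyadicPoints {n : ℕ} {x : ℝ} (hx : x ∈ dyadicPoints n) :
    approxConj g v (n + 1) x = approxConj g v n x := by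
  induction n generalizing x with
  | zero =>
    rcases eq_zero_or_eq_one_of_mem_dyadicPoints_zero hx with rfl | rfl
    · rw [hg.approxConj_zero, hg.approxConj_zero]
    · rw [hg.approxConj_one, hg.approxConj_one]
  | succ n ih =>
    have ht := ih (tent_mem_dyadicPoints hx)
    rcases le_total x (1 / 2) with h | h
    · rw [approxConj_succ_of_le_half _ h, approxConj_succ_of_le_half _ h, ht]
    · rw [hg.approxConj_succ_of_half_le _ h, hg.approxConj_succ_of_half_le _ h, ht]

lemma approxConj_of_mem_dyadicPoints {m n : ℕ} {x : ℝ} (hnm : n ≤ m) (hx : x ∈ dyadicPoints n) :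
    approxConj g v m x = approxConj g v n x := by
  induction m, hnm using Nat.le_induction with
  | base => rfl
  | succ m hnm ih =>
    rw [hg.approxConj_succ_of_mem_dyadicPoints (dyadicPoints_mono hnm hx), ih]

lemma exists_mem_dyadicPoints_approxConj_eq {n : ℕ} {z : ℝ} (hz : z ∈ Icc 0 1)
    (h : g^[n] z = 0) : ∃ x ∈ dyadicPoints n, approxConj g v n x = z := by
  induction n generalizing z with
  | zero => exact ⟨0, zero_mem_dyadicPoints 0, h.symm⟩
  | succ n ih =>
    rw [iterate_succ_apply] at h
    obtain ⟨y, hy, hyz⟩ := ih (hg.mapsTo hz) h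
    have hy₀ := hy.1.1
    have hy₁ := hy.1.2
    rcases le_total z v with hzv | hzv
    · refine ⟨y / 2, half_mem_dyadicPoints hy, ?_⟩
      rw [approxConj_succ_of_le_half n (by linarith), tent_of_le_half (by linarith),
        mul_div_cancel₀ _ two_ne_zero, hyz, hg.leftBranch_map ⟨hz.1, hzv⟩]
    · refine ⟨1 - y / 2, one_sub_half_mem_dyadicPoints hy, ?_⟩
      rw [hg.approxConj_succ_of_half_le n (by linarith), tent_of_half_le (by linarith),
        show 2 - 2 * (1 - y / 2) = y by ring, hyz, hg.rightBranch_map ⟨hzv, hz.2⟩]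

end UnimodalWithPeak

noncomputable def tentConj (g : ℝ → ℝ) (v x : ℝ) : ℝ :=
  sSup (⋃ n, approxConj g v n '' (dyadicPoints n ∩ Iic x))

namespace UnimodalWithPeak

variable {g : ℝ → ℝ} {v : ℝ} (hg : UnimodalWithPeak g v)
include hg

lemma bddAbove_approxConj_image (x : ℝ) :
    BddAbove (⋃ n, approxConj g v n '' (dyadicPoints n ∩ Iic x)) := by
  refine ⟨1, ?_⟩
  simp only [mem_upperBounds, mem_iUnion, mem_image]
  rintro _ ⟨n, y, ⟨hy, -⟩, rfl⟩
  exact (hg.approxConj_mapsTo n hy.1).2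

lemma tentConj_eq_approxConj {n : ℕ} {x : ℝ} (hx : x ∈ dyadicPoints n) :
    tentConj g v x = approxConj g v n x := by
  have hmem : approxConj g v n x ∈ ⋃ m, approxConj g v m '' (dyadicPoints m ∩ Iic x) :=
    mem_iUnion.2 ⟨n, mem_image_of_mem _ ⟨hx, self_mem_Iic⟩⟩
  refine le_antisymm (csSup_le ⟨_, hmem⟩ ?_) (le_csSup (hg.bddAbove_approxConj_image x) hmem)
  simp only [mem_iUnion, mem_image]
  rintro _ ⟨m, y, ⟨hy, hyx⟩, rfl⟩
  rw [← hg.approxConj_of_mem_dyadicPoints (le_max_left m n) hy,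
    ← hg.approxConj_of_mem_dyadicPoints (le_max_right m n) hx]
  exact (hg.strictMonoOn_approxConj _).monotoneOn hy.1 hx.1 hyx

lemma tentConj_zero : tentConj g v 0 = 0 :=
  (hg.tentConj_eq_approxConj (zero_mem_dyadicPoints 0)).trans (hg.approxConj_zero 0)

lemma tentConj_one : tentConj g v 1 = 1 :=
  (hg.tentConj_eq_approxConj (one_mem_dyadicPoints 0)).trans (hg.approxConj_one 0)

lemma monotoneOn_tentConj : MonotoneOn (tentConj g v) (Icc 0 1) := by
  intro x hx y _ hxy
  refine csSup_le_csSup (hg.bddAbove_approxConj_image y)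
    ⟨0, mem_iUnion.2 ⟨0, 0, ⟨zero_mem_dyadicPoints 0, hx.1⟩, rfl⟩⟩ ?_
  exact iUnion_mono fun n => image_mono (inter_subset_inter_right _ (Iic_subset_Iic.2 hxy))

lemma tentConj_mapsTo : MapsTo (tentConj g v) (Icc 0 1) (Icc 0 1) := fun _ hx =>
  ⟨hg.tentConj_zero ▸ hg.monotoneOn_tentConj ⟨le_rfl, zero_le_one⟩ hx hx.1,
    hg.tentConj_one ▸ hg.monotoneOn_tentConj hx ⟨zero_le_one, le_rfl⟩ hx.2⟩

lemma strictMonoOn_tentConj : StrictMonoOn (tentConj g v) (Icc 0 1) := by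
  intro x hx y hy hxy
  obtain ⟨n, a, ha, b, hb, hxa, hab, hby⟩ := exists_dyadicPoints_between hx.1 hxy hy.2
  calc tentConj g v x ≤ tentConj g v a := hg.monotoneOn_tentConj hx ha.1 hxa.le
    _ = approxConj g v n a := hg.tentConj_eq_approxConj ha
    _ < approxConj g v n b := hg.strictMonoOn_approxConj n ha.1 hb.1 hab
    _ = tentConj g v b := (hg.tentConj_eq_approxConj hb).symm
    _ ≤ tentConj g v y := hg.monotoneOn_tentConj hb.1 hy hby.le

lemma completePreimZero_subset_image_tentConj :
    completePreimZero g ⊆ tentConj g v '' Icc 0 1 := by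
  simp only [completePreimZero, preimZero, subset_def, mem_iUnion]
  rintro z ⟨n, -, hz, hgz⟩
  obtain ⟨x, hx, rfl⟩ := hg.exists_mem_dyadicPoints_approxConj_eq hz hgz
  exact ⟨x, hx.1, hg.tentConj_eq_approxConj hx⟩

variable (hdense : Icc (0 : ℝ) 1 ⊆ closure (completePreimZero g))
include hdense

lemma continuousOn_tentConj : ContinuousOn (tentConj g v) (Icc 0 1) :=
  continuousOn_Icc_of_monotoneOn_of_subset_closure_image hg.monotoneOn_tentConj
    hg.tentConj_mapsTo (hdense.trans (closure_mono hg.completePreimZero_subset_image_tentConj))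

lemma bijOn_tentConj : BijOn (tentConj g v) (Icc 0 1) (Icc 0 1) := by
  refine ⟨hg.tentConj_mapsTo, hg.strictMonoOn_tentConj.injOn, ?_⟩
  have := intermediate_value_Icc zero_le_one (hg.continuousOn_tentConj hdense)
  rwa [hg.tentConj_zero, hg.tentConj_one] at this

lemma tentConj_tent : EqOn (tentConj g v ∘ tent) (g ∘ tentConj g v) (Icc 0 1) := by
  have hc := hg.continuousOn_tentConj hdense
  refine EqOn.of_subset_closure ?_ (hc.comp continuous_tent.continuousOn tent_mapsTo)
    (hg.continuousOn.comp hc hg.tentConj_mapsTo) iUnion_dyadicPoints_subset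
    Icc_subset_closure_iUnion_dyadicPoints
  simp only [EqOn, mem_iUnion, comp_apply]
  rintro x ⟨n, hx⟩
  have hx' := dyadicPoints_mono n.le_succ hx
  rw [hg.tentConj_eq_approxConj (tent_mem_dyadicPoints hx'), hg.tentConj_eq_approxConj hx',
    hg.map_approxConj_succ n hx.1]

lemma conjTent_tentConj : ConjTent g (tentConj g v) :=
  ⟨⟨hg.continuousOn_tentConj hdense, hg.bijOn_tentConj hdense⟩, hg.tentConj_zero,
    hg.tentConj_tent hdense⟩

end UnimodalWithPeak

namespace ConjTent

variable {g h : ℝ → ℝ} {v : ℝ} (hh : ConjTent g h) (hg : UnimodalWithPeak g v)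
include hh hg

lemma map_one : h 1 = 1 := by
  obtain ⟨⟨-, hbij⟩, h0, hconj⟩ := hh
  have h1I : (1 : ℝ) ∈ Icc 0 1 := right_mem_Icc.2 zero_le_one
  have hg1 : g (h 1) = 0 := by rw [← hconj 1 h1I, tent_one, h0]
  refine (hg.eq_zero_or_eq_one_of_map_eq_zero (hbij.mapsTo h1I) hg1).resolve_left fun h1 => ?_
  exact one_ne_zero (hbij.injOn h1I (left_mem_Icc.2 zero_le_one) (h1.trans h0.symm) : (1 : ℝ) = 0)

lemma strictMonoOn : StrictMonoOn h (Icc 0 1) :=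
  ContinuousOn.strictMonoOn_of_injOn_Icc zero_le_one
    (by rw [hh.2.1, hh.map_one hg]; exact zero_le_one) hh.1.1 hh.1.2.injOn

lemma map_half : h (1 / 2) = v := by
  have hhalf : (1 / 2 : ℝ) ∈ Icc 0 1 := ⟨by norm_num, by norm_num⟩
  refine hg.eq_peak_of_map_eq_one (hh.1.2.mapsTo hhalf) ?_
  rw [← hh.2.2 _ hhalf, tent_half, hh.map_one hg]

lemma eq_approxConj {n : ℕ} {x : ℝ} (hx : x ∈ dyadicPoints n) : h x = approxConj g v n x := by
  induction n generalizing x with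
  | zero =>
    rcases eq_zero_or_eq_one_of_mem_dyadicPoints_zero hx with rfl | rfl
    · exact hh.2.1
    · exact hh.map_one hg
  | succ n ih =>
    have hgx : g (h x) = approxConj g v n (tent x) := by
      rw [← hh.2.2 x hx.1, ih (tent_mem_dyadicPoints hx)]
    have hhx := hh.1.2.mapsTo hx.1
    have hhalf : (1 / 2 : ℝ) ∈ Icc 0 1 := ⟨by norm_num, by norm_num⟩
    rcases le_total x (1 / 2) with hx2 | hx2
    · have hmem : h x ∈ Icc 0 v :=
        ⟨hhx.1, hh.map_half hg ▸ (hh.strictMonoOn hg).monotoneOn hx.1 hhalf hx2⟩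
      rw [approxConj_succ_of_le_half n hx2, ← hgx, hg.leftBranch_map hmem]
    · have hmem : h x ∈ Icc v 1 :=
        ⟨hh.map_half hg ▸ (hh.strictMonoOn hg).monotoneOn hhalf hx.1 hx2, hhx.2⟩
      rw [hg.approxConj_succ_of_half_le n hx2, ← hgx, hg.rightBranch_map hmem]

lemma eqOn {h' : ℝ → ℝ} (hh' : ConjTent g h') : EqOn h h' (Icc 0 1) := by
  refine EqOn.of_subset_closure ?_ hh.1.1 hh'.1.1 iUnion_dyadicPoints_subset
    Icc_subset_closure_iUnion_dyadicPoints
  simp only [EqOn, mem_iUnion]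
  rintro x ⟨n, hx⟩
  rw [hh.eq_approxConj hg hx, hh'.eq_approxConj hg hx]

end ConjTent

/-- A carcass map whose complete pre-image of `0` is dense in `[0,1]` is
topologically conjugated to the tent map via exactly one conjugacy. -/
theorem unique_conjugacy (g : ℝ → ℝ) (hg : IsCarcass g)
    (hdense : Icc (0:ℝ) 1 ⊆ closure (completePreimZero g)) :
    (∃ h : ℝ → ℝ, ConjTent g h) ∧
    ∀ h₁ h₂ : ℝ → ℝ, ConjTent g h₁ → ConjTent g h₂ →
      ∀ x ∈ Icc (0:ℝ) 1, h₁ x = h₂ x := by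
  obtain ⟨v, hv⟩ := hg.1.exists_unimodalWithPeak
  exact ⟨⟨tentConj g v, hv.conjTent_tentConj hdense⟩, fun _ _ hh₁ hh₂ => hh₁.eqOn hv hh₂⟩
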